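/- For every positive class S, the unique positive equilibrium x̄_S ∈ S ∩ E₊ is asymptotically stable relative to S: for each ε > 0 there is δ > 0 such that every solution with x(0) ∈ S and |x(0) − x̄_S| < δ satisfies |x(t) − x̄_S| < ε for all t ≥ 0, and there is ε₀ > 0 such that every solution with x(0) ∈ S and |x(0) − x̄_S| < ε₀ satisfies x(t) → x̄_S as t → +∞. -/

import Mathlib

open MeasureTheory Set intervalIntegral


lemma aux_exp_ineq (a b : ℝ) : Real.exp b * (a - b) ≤ Real.exp a - Real.exp b := by
  have h := Real.add_one_le_exp (a - b)
  have h2 : Real.exp b * ((a - b) + 1) ≤ Real.exp b * Real.exp (a - b) :=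
    mul_le_mul_of_nonneg_left h (Real.exp_nonneg b)
  rw [← Real.exp_add] at h2
  have : b + (a - b) = a := by ring
  rw [this] at h2
  nlinarith

lemma aux_exp_eq (a b : ℝ) (h : Real.exp b * (a - b) = Real.exp a - Real.exp b) : a = b := by
  by_contra hne
  have hx : a - b ≠ 0 := sub_ne_zero.mpr hne
  have h1 := Real.add_one_lt_exp hx
  have h2 : Real.exp b * ((a - b) + 1) < Real.exp b * Real.exp (a - b) :=
    mul_lt_mul_of_pos_left h1 (Real.exp_pos b)
  rw [← Real.exp_add] at h2
  have hba : b + (a - b) = a := by ring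
  rw [hba] at h2
  nlinarith

lemma aux_lyap_sum {m : ℕ} (c : Fin m → Fin m → ℝ) (hc : ∀ i j, 0 ≤ c i j)
    (hbal : ∀ i, ∑ j, c i j = ∑ j, c j i) (u : Fin m → ℝ) :
    (∑ i, ∑ j, c i j * (Real.exp (u j) * (u i - u j)) ≤ 0) ∧
    (∑ i, ∑ j, c i j * (Real.exp (u j) * (u i - u j)) = 0 →
      ∀ i j, 0 < c i j → u i = u j) := by
  have hmaj : ∑ i, ∑ j, c i j * (Real.exp (u i) - Real.exp (u j)) = 0 := by
    have h1 : ∑ i, ∑ j, c i j * Real.exp (u i) = ∑ i, ∑ j, c j i * Real.exp (u i) := by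
      refine Finset.sum_congr rfl fun i _ => ?_
      rw [← Finset.sum_mul, ← Finset.sum_mul, hbal i]
    have h2 : ∑ i, ∑ j, c j i * Real.exp (u i) = ∑ i, ∑ j, c i j * Real.exp (u j) :=
      Finset.sum_comm
    simp only [mul_sub, Finset.sum_sub_distrib]
    rw [h1, h2, sub_self]
  -- termwise inequality
  have hterm : ∀ i j : Fin m, c i j * (Real.exp (u j) * (u i - u j)) ≤
      c i j * (Real.exp (u i) - Real.exp (u j)) := fun i j =>
    mul_le_mul_of_nonneg_left (aux_exp_ineq (u i) (u j)) (hc i j)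
  have hle : ∑ i, ∑ j, c i j * (Real.exp (u j) * (u i - u j)) ≤
      ∑ i, ∑ j, c i j * (Real.exp (u i) - Real.exp (u j)) :=
    Finset.sum_le_sum fun i _ => Finset.sum_le_sum fun j _ => hterm i j
  constructor
  · linarith [hle, hmaj.le]
  · intro heq i j hcij
    -- sum of nonneg differences is zero
    have hzero : ∑ i, ∑ j, (c i j * (Real.exp (u i) - Real.exp (u j)) -
        c i j * (Real.exp (u j) * (u i - u j))) = 0 := by
      simp only [Finset.sum_sub_distrib]
      rw [hmaj, heq, sub_self]
    have hnn : ∀ i ∈ Finset.univ, (0:ℝ) ≤ ∑ j, (c i j * (Real.exp (u i) - Real.exp (u j)) -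
        c i j * (Real.exp (u j) * (u i - u j))) := fun i _ =>
      Finset.sum_nonneg fun j _ => sub_nonneg.mpr (hterm i j)
    have h3 := (Finset.sum_eq_zero_iff_of_nonneg hnn).mp hzero i (Finset.mem_univ i)
    have hnn2 : ∀ j ∈ Finset.univ, (0:ℝ) ≤ (c i j * (Real.exp (u i) - Real.exp (u j)) -
        c i j * (Real.exp (u j) * (u i - u j))) := fun j _ => sub_nonneg.mpr (hterm i j)
    have h4 := (Finset.sum_eq_zero_iff_of_nonneg hnn2).mp h3 j (Finset.mem_univ j)
    have h5 : Real.exp (u j) * (u i - u j) = Real.exp (u i) - Real.exp (u j) := by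
      have := sub_eq_zero.mp h4
      field_simp at this ⊢
      nlinarith [hcij]
    exact aux_exp_eq (u i) (u j) h5


lemma aux_pow_nonneg {m : ℕ} (M : Matrix (Fin m) (Fin m) ℝ) (h : ∀ i j, 0 ≤ M i j) :
    ∀ s, ∀ i j, 0 ≤ (M ^ s) i j := by
  intro s
  induction s with
  | zero =>
    intro i j
    simp only [pow_zero, Matrix.one_apply]
    split <;> norm_num
  | succ s ih =>
    intro i j
    rw [pow_succ, Matrix.mul_apply]
    exact Finset.sum_nonneg fun k _ => mul_nonneg (ih i k) (h k j)

lemma aux_connect {m : ℕ} (A : Matrix (Fin m) (Fin m) ℝ) (hAnn : ∀ i j, 0 ≤ A i j)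
    (u : Fin m → ℝ) (hu : ∀ i j, 0 < A i j → u i = u j) :
    ∀ s, ∀ i j : Fin m, 0 < (((1 + A : Matrix (Fin m) (Fin m) ℝ)) ^ s) i j → u i = u j := by
  have hMnn : ∀ i j, 0 ≤ (1 + A : Matrix (Fin m) (Fin m) ℝ) i j := by
    intro i j
    simp only [Matrix.add_apply, Matrix.one_apply]
    split
    · linarith [hAnn i j]
    · linarith [hAnn i j]
  intro s
  induction s with
  | zero =>
    intro i j h
    simp only [pow_zero, Matrix.one_apply] at h
    split at h
    · subst ‹i = j›; rfl
    · norm_num at h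
  | succ s ih =>
    intro i j h
    rw [pow_succ, Matrix.mul_apply] at h
    obtain ⟨k, -, hk⟩ : ∃ k ∈ Finset.univ, 0 < ((1 + A) ^ s) i k * (1 + A) k j := by
      by_contra hcon
      push_neg at hcon
      have : ∑ k, ((1 + A) ^ s) i k * (1 + A) k j ≤ 0 :=
        Finset.sum_nonpos fun k hk => hcon k hk
      linarith
    have h1 : 0 < ((1 + A) ^ s) i k := by
      rcases lt_or_ge 0 (((1 + A) ^ s) i k) with h' | h'
      · exact h'
      · exfalso
        have := aux_pow_nonneg (1 + A) hMnn s i k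
        have hz : ((1 + A) ^ s) i k = 0 := le_antisymm h' this
        rw [hz, zero_mul] at hk; exact lt_irrefl 0 hk
    have h2 : 0 < (1 + A) k j := by
      rcases lt_or_ge 0 ((1 + A) k j) with h' | h'
      · exact h'
      · exfalso; nlinarith [aux_pow_nonneg (1 + A) hMnn s i k]
    have huik := ih i k h1
    by_cases hkj : k = j
    · subst hkj; exact huik
    · have : 0 < A k j := by
        simpa [Matrix.add_apply, Matrix.one_apply, hkj] using h2
      exact huik.trans (hu k j this)

lemma aux_rank_inj {n m : ℕ} (B : Matrix (Fin n) (Fin m) ℝ) (h : B.rank = m)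
    (c : Fin m → ℝ) (hc : B.mulVec c = 0) : c = 0 := by
  have hker : LinearMap.ker B.mulVecLin = ⊥ := by
    have hr : Module.finrank ℝ (LinearMap.range B.mulVecLin) = m := h
    have := LinearMap.finrank_range_add_finrank_ker B.mulVecLin
    rw [hr] at this
    have hdim : Module.finrank ℝ (Fin m → ℝ) = m := by simp
    rw [hdim] at this
    have : Module.finrank ℝ (LinearMap.ker B.mulVecLin) = 0 := by omega
    exact Submodule.finrank_eq_zero.mp this
  have : c ∈ LinearMap.ker B.mulVecLin := by
    simp [LinearMap.mem_ker, Matrix.mulVecLin_apply, hc]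
  rw [hker] at this
  simpa using this

lemma aux_norm_lt {n : ℕ} (v : EuclideanSpace ℝ (Fin n)) (r : ℝ) (hr : 0 < r)
    (h : ∀ k, |v k| < r) : ‖v‖ < (n + 1) * r := by
  have hnorm : ‖v‖ = Real.sqrt (∑ k, ‖v k‖ ^ 2) := EuclideanSpace.norm_eq v
  have hsum : ∑ k, ‖v k‖ ^ 2 ≤ n * r ^ 2 := by
    calc ∑ k, ‖v k‖ ^ 2 ≤ ∑ _k : Fin n, r ^ 2 := by
          refine Finset.sum_le_sum fun k _ => ?_
          rw [Real.norm_eq_abs]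
          nlinarith [h k, abs_nonneg (v k)]
      _ = n * r ^ 2 := by simp [mul_comm]
  have h2 : ‖v‖ ^ 2 ≤ n * r ^ 2 := by
    rw [hnorm, Real.sq_sqrt (Finset.sum_nonneg fun k _ => sq_nonneg _)]
    exact hsum
  have h3 : ‖v‖ ^ 2 < ((n + 1) * r) ^ 2 := by nlinarith [Nat.cast_nonneg (α := ℝ) n]
  have hnn : (0:ℝ) ≤ (n + 1) * r := by positivity
  exact lt_of_pow_lt_pow_left₀ 2 hnn h3


noncomputable def gaux (θ : ℝ → ℝ) : ℝ → ℝ := fun t => if 0 < t then Real.log (θ t) else 0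

noncomputable def haux (θ : ℝ → ℝ) (c : ℝ) : ℝ → ℝ :=
  fun s => (∫ t in c..(max s 0), (gaux θ t - Real.log (θ c))) + max (-s) 0

lemma gaux_measurable (θ : ℝ → ℝ) (hθc : Continuous θ) : Measurable (gaux θ) :=
  Measurable.ite measurableSet_Ioi (Real.measurable_log.comp hθc.measurable) measurable_const

lemma gaux_continuousAt {θ : ℝ → ℝ} (hθc : Continuous θ)
    (hθpos : ∀ s : ℝ, 0 < s → 0 < θ s) {s : ℝ} (hs : 0 < s) :
    ContinuousAt (gaux θ) s := by
  have h1 : ContinuousAt (fun t => Real.log (θ t)) s :=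
    (Real.continuousAt_log (ne_of_gt (hθpos s hs))).comp hθc.continuousAt
  apply h1.congr
  filter_upwards [Ioi_mem_nhds hs] with t ht
  simp [gaux, mem_Ioi.mp ht]

lemma gaux_lt {θ : ℝ → ℝ} (hθpos : ∀ s : ℝ, 0 < s → 0 < θ s)
    (hθmono : StrictMonoOn θ (Ici (0:ℝ)))
    {t₁ t₂ : ℝ} (h1 : 0 < t₁) (h2 : t₁ < t₂) : gaux θ t₁ < gaux θ t₂ := by
  have : θ t₁ < θ t₂ := hθmono (mem_Ici.mpr h1.le) (mem_Ici.mpr (h1.trans h2).le) h2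
  simp only [gaux, if_pos h1, if_pos (h1.trans h2)]
  exact Real.log_lt_log (hθpos t₁ h1) this

lemma gaux_pos_eq {θ : ℝ → ℝ} {c : ℝ} (hc : 0 < c) : gaux θ c = Real.log (θ c) := by
  simp [gaux, hc]

lemma hII_sub {θ : ℝ → ℝ} (hII : ∀ a b : ℝ, IntervalIntegrable (gaux θ) volume a b)
    (d : ℝ) : ∀ a b : ℝ, IntervalIntegrable (fun t => gaux θ t - d) volume a b :=
  fun a b => (hII a b).sub intervalIntegrable_const

lemma haux_continuous {θ : ℝ → ℝ} (hII : ∀ a b : ℝ, IntervalIntegrable (gaux θ) volume a b)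
    (c : ℝ) : Continuous (haux θ c) := by
  have h1 : Continuous fun s : ℝ => ∫ t in c..s, (gaux θ t - Real.log (θ c)) :=
    intervalIntegral.continuous_primitive (hII_sub hII _) c
  exact (h1.comp (continuous_id.max continuous_const)).add
    (continuous_neg.max continuous_const)

lemma haux_hasDerivAt {θ : ℝ → ℝ} (hθc : Continuous θ)
    (hθpos : ∀ s : ℝ, 0 < s → 0 < θ s)
    (hII : ∀ a b : ℝ, IntervalIntegrable (gaux θ) volume a b)
    (c : ℝ) {s : ℝ} (hs : 0 < s) :
    HasDerivAt (haux θ c) (gaux θ s - Real.log (θ c)) s := by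
  have hF : HasDerivAt (fun u => ∫ t in c..u, (gaux θ t - Real.log (θ c)))
      (gaux θ s - Real.log (θ c)) s := by
    apply intervalIntegral.integral_hasDerivAt_right (hII_sub hII _ c s)
    · exact ⟨univ, Filter.univ_mem,
        ((((gaux_measurable θ hθc).sub measurable_const).stronglyMeasurable).aestronglyMeasurable)⟩
    · exact (gaux_continuousAt hθc hθpos hs).sub continuousAt_const
  apply hF.congr_of_eventuallyEq
  filter_upwards [Ioi_mem_nhds hs] with t ht
  have ht' : (0:ℝ) < t := ht
  simp [haux, max_eq_left ht'.le, max_eq_right (by linarith : -t ≤ 0)]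

lemma haux_self {θ : ℝ → ℝ} {c : ℝ} (hc : 0 < c) : haux θ c c = 0 := by
  simp [haux, max_eq_left hc.le, max_eq_right (by linarith : -c ≤ 0)]

lemma haux_pos {θ : ℝ → ℝ} (hθpos : ∀ s : ℝ, 0 < s → 0 < θ s)
    (hθmono : StrictMonoOn θ (Ici (0:ℝ)))
    (hII : ∀ a b : ℝ, IntervalIntegrable (gaux θ) volume a b)
    {c : ℝ} (hc : 0 < c) {s : ℝ} (hs : 0 ≤ s) (hne : s ≠ c) : 0 < haux θ c s := by
  have hmax : max s 0 = s := max_eq_left hs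
  have hmax2 : max (-s) 0 = 0 := max_eq_right (by linarith)
  simp only [haux, hmax, hmax2, add_zero]
  rcases lt_or_gt_of_ne hne with hlt | hgt
  · have hpos : 0 < ∫ t in s..c, (Real.log (θ c) - gaux θ t) := by
      apply intervalIntegral_pos_of_pos_on
      · have := ((hII_sub hII (Real.log (θ c)) s c).neg)
        apply this.congr
        intro t _
        simp only [Pi.neg_apply]; ring
      · intro t ht
        have h0t : 0 < t := lt_of_le_of_lt hs ht.1
        have h2 := gaux_lt hθpos hθmono h0t ht.2
        rw [gaux_pos_eq hc] at h2
        linarith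
      · exact hlt
    have hsymm : ∫ t in c..s, (gaux θ t - Real.log (θ c)) =
        -∫ t in s..c, (gaux θ t - Real.log (θ c)) := intervalIntegral.integral_symm s c
    have hneg : ∫ t in s..c, (Real.log (θ c) - gaux θ t) =
        -∫ t in s..c, (gaux θ t - Real.log (θ c)) := by
      rw [← intervalIntegral.integral_neg]
      congr 1; ext t; ring
    rw [hsymm]; rw [hneg] at hpos; exact hpos
  · apply intervalIntegral_pos_of_pos_on (hII_sub hII _ c s)
    · intro t ht
      have h2 := gaux_lt hθpos hθmono hc ht.1
      rw [gaux_pos_eq hc] at h2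
      linarith
    · exact hgt

lemma haux_negside {θ : ℝ → ℝ} (c : ℝ) {s : ℝ} (hs : s < 0) :
    haux θ c s = haux θ c 0 + (-s) := by
  simp [haux, max_eq_right hs.le, max_eq_left (by linarith : (0:ℝ) ≤ -s)]

lemma haux_nonneg {θ : ℝ → ℝ} (hθpos : ∀ s : ℝ, 0 < s → 0 < θ s)
    (hθmono : StrictMonoOn θ (Ici (0:ℝ)))
    (hII : ∀ a b : ℝ, IntervalIntegrable (gaux θ) volume a b)
    {c : ℝ} (hc : 0 < c) : ∀ s : ℝ, 0 ≤ haux θ c s := by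
  intro s
  rcases lt_or_ge s 0 with hs | hs
  · rw [haux_negside c hs]
    have h0 : 0 ≤ haux θ c 0 := (haux_pos hθpos hθmono hII hc le_rfl (ne_of_lt hc)).le
    linarith
  · rcases eq_or_ne s c with h | h
    · rw [h, haux_self hc]
    · exact (haux_pos hθpos hθmono hII hc hs h).le

lemma haux_monoOn {θ : ℝ → ℝ} (hθc : Continuous θ)
    (hθpos : ∀ s : ℝ, 0 < s → 0 < θ s)
    (hθmono : StrictMonoOn θ (Ici (0:ℝ)))
    (hII : ∀ a b : ℝ, IntervalIntegrable (gaux θ) volume a b)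
    {c : ℝ} (hc : 0 < c) : MonotoneOn (haux θ c) (Ici c) := by
  apply monotoneOn_of_deriv_nonneg (convex_Ici c) ((haux_continuous hII c).continuousOn)
  · intro s hs
    rw [interior_Ici] at hs
    exact ((haux_hasDerivAt hθc hθpos hII c (hc.trans hs)).differentiableAt).differentiableWithinAt
  · intro s hs
    rw [interior_Ici] at hs
    rw [(haux_hasDerivAt hθc hθpos hII c (hc.trans hs)).deriv]
    have h2 := gaux_lt hθpos hθmono hc hs
    rw [gaux_pos_eq hc] at h2
    linarith

lemma haux_antiOn {θ : ℝ → ℝ} (hθc : Continuous θ)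
    (hθpos : ∀ s : ℝ, 0 < s → 0 < θ s)
    (hθmono : StrictMonoOn θ (Ici (0:ℝ)))
    (hII : ∀ a b : ℝ, IntervalIntegrable (gaux θ) volume a b)
    {c : ℝ} (hc : 0 < c) : AntitoneOn (haux θ c) (Icc 0 c) := by
  apply antitoneOn_of_deriv_nonpos (convex_Icc 0 c) ((haux_continuous hII c).continuousOn)
  · intro s hs
    rw [interior_Icc] at hs
    exact ((haux_hasDerivAt hθc hθpos hII c hs.1).differentiableAt).differentiableWithinAt
  · intro s hs
    rw [interior_Icc] at hs
    rw [(haux_hasDerivAt hθc hθpos hII c hs.1).deriv]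
    have h2 := gaux_lt hθpos hθmono hs.1 hs.2
    rw [gaux_pos_eq hc] at h2
    linarith

lemma gaux_intervalIntegrable (θ : ℝ → ℝ) (hθc : Continuous θ)
    (hθpos : ∀ s : ℝ, 0 < s → 0 < θ s)
    (hθint : IntegrableOn (fun y => |Real.log (θ y)|) (Ioc (0:ℝ) 1)) :
    ∀ a b : ℝ, IntervalIntegrable (gaux θ) volume a b := by
  have hmeas := gaux_measurable θ hθc
  have hIoc1 : IntegrableOn (gaux θ) (Ioc (0:ℝ) 1) := by
    apply Integrable.mono' hθint (hmeas.aestronglyMeasurable.restrict)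
    filter_upwards [ae_restrict_mem measurableSet_Ioc] with t ht
    simp only [gaux, if_pos ht.1, Real.norm_eq_abs, le_refl]
  have hIic : ∀ a : ℝ, IntegrableOn (gaux θ) (Iic a) → True := fun _ _ => trivial
  have hIic0 : IntegrableOn (gaux θ) (Iic (0:ℝ)) := by
    have : EqOn (gaux θ) 0 (Iic (0:ℝ)) := by
      intro t ht
      simp [gaux, not_lt.mpr (mem_Iic.mp ht)]
    exact (integrableOn_congr_fun this measurableSet_Iic).mpr (integrableOn_zero)
  have hIcc : ∀ a b : ℝ, 0 < a → IntegrableOn (gaux θ) (Icc a b) := by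
    intro a b ha
    apply ContinuousOn.integrableOn_Icc
    intro t ht
    exact (gaux_continuousAt hθc hθpos (lt_of_lt_of_le ha ht.1)).continuousWithinAt
  intro a b
  rw [intervalIntegrable_iff]
  set R := max 1 (max |a| |b|) with hR
  have hR1 : (1:ℝ) ≤ R := le_max_left _ _
  have hbig : IntegrableOn (gaux θ) (Iic 0 ∪ (Ioc 0 1 ∪ Icc 1 R)) := by
    refine IntegrableOn.union hIic0 (IntegrableOn.union hIoc1 (hIcc 1 R one_pos))
  apply hbig.mono_set
  intro t ht
  rcases le_or_gt t 0 with h0 | h0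
  · exact Or.inl h0
  rcases le_or_gt t 1 with h1 | h1
  · exact Or.inr (Or.inl ⟨h0, h1⟩)
  · refine Or.inr (Or.inr ⟨h1.le, ?_⟩)
    have ht' := uIoc_subset_uIcc ht
    have hmin : min a b ≤ t ∧ t ≤ max a b := by
      rw [uIcc] at ht'
      exact ⟨ht'.1, ht'.2⟩
    calc t ≤ max a b := hmin.2
      _ ≤ max |a| |b| := max_le_max (le_abs_self a) (le_abs_self b)
      _ ≤ R := le_max_right _ _

set_option maxHeartbeats 1600000 in
theorem stmt_2
    (n m : ℕ) (hm : 0 < m) (hmn : m ≤ n)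
    (θ : ℝ → ℝ)
    (hθlip : LocallyLipschitz θ)
    (hθ0 : θ 0 = 0)
    (hθnn : ∀ y : ℝ, 0 ≤ θ y)
    (hθmono : StrictMonoOn θ (Set.Ici (0:ℝ)))
    (hθonto : ∀ r : ℝ, 0 ≤ r → ∃ y : ℝ, 0 ≤ y ∧ θ y = r)
    (hθint : MeasureTheory.IntegrableOn (fun y => |Real.log (θ y)|) (Set.Ioc (0:ℝ) 1))
    (A : Matrix (Fin m) (Fin m) ℝ)
    (hAnn : ∀ i j, 0 ≤ A i j)
    (hAirr : ∀ i j, 0 < ((1 + A) ^ (m - 1)) i j)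
    (B : Matrix (Fin n) (Fin m) ℝ)
    (hBnn : ∀ k j, 0 ≤ B k j)
    (hBrank : B.rank = m)
    (hBrow : ∀ k, ∃ j, B k j ≠ 0)
    (hBent : ∀ k j, B k j = 0 ∨ 1 ≤ B k j)
    (f : EuclideanSpace ℝ (Fin n) → EuclideanSpace ℝ (Fin n))
    (hf : ∀ x : EuclideanSpace ℝ (Fin n), ∀ k : Fin n,
      f x k = ∑ i : Fin m, ∑ j : Fin m,
        A i j * (∏ l : Fin n, θ (x l) ^ (B l j)) * (B k i - B k j))
    (p : EuclideanSpace ℝ (Fin n)) (hp : ∀ k, 0 ≤ p k)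
    (D : Submodule ℝ (EuclideanSpace ℝ (Fin n)))
    (hD : D = Submodule.span ℝ
      {v : EuclideanSpace ℝ (Fin n) | ∃ i j : Fin m, v = fun k => B k i - B k j})
    (S : Set (EuclideanSpace ℝ (Fin n)))
    (hS : S = {x : EuclideanSpace ℝ (Fin n) | (∀ k, 0 ≤ x k) ∧ x - p ∈ D})
    (hSpos : ∃ q ∈ S, ∀ k, 0 < q k)
    (xbarS : EuclideanSpace ℝ (Fin n))
    (hxS : xbarS ∈ S) (hxpos : ∀ k, 0 < xbarS k) (hxeq : f xbarS = 0)
    :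
    (∀ ε > (0:ℝ), ∃ δ > (0:ℝ), ∀ x : ℝ → EuclideanSpace ℝ (Fin n),
      (∀ t ∈ Set.Ici (0:ℝ), HasDerivWithinAt x (f (x t)) (Set.Ici 0) t) →
      x 0 ∈ S → ‖x 0 - xbarS‖ < δ → ∀ t ≥ (0:ℝ), ‖x t - xbarS‖ < ε) ∧
    (∃ ε₀ > (0:ℝ), ∀ x : ℝ → EuclideanSpace ℝ (Fin n),
      (∀ t ∈ Set.Ici (0:ℝ), HasDerivWithinAt x (f (x t)) (Set.Ici 0) t) →
      x 0 ∈ S → ‖x 0 - xbarS‖ < ε₀ →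
      Filter.Tendsto x Filter.atTop (nhds xbarS)) := by
  classical
  have hn : 0 < n := lt_of_lt_of_le hm hmn
  haveI : Nonempty (Fin n) := ⟨⟨0, hn⟩⟩
  have hθc : Continuous θ := hθlip.continuous
  have hθpos : ∀ s : ℝ, 0 < s → 0 < θ s := by
    intro s hs
    have h2 := hθmono (Set.self_mem_Ici) (Set.mem_Ici.mpr hs.le) hs
    rwa [hθ0] at h2
  have hII : ∀ a b : ℝ, IntervalIntegrable (gaux θ) MeasureTheory.volume a b :=
    gaux_intervalIntegrable θ hθc hθpos hθint
  set μ : Fin n → ℝ := fun k => Real.log (θ (xbarS k)) with hμ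
  set h : Fin n → ℝ → ℝ := fun k => haux θ (xbarS k) with hhdef
  set V : EuclideanSpace ℝ (Fin n) → ℝ := fun y => ∑ k, h k (y k) with hVdef
  set W : EuclideanSpace ℝ (Fin n) → ℝ :=
    fun y => ∑ k, (gaux θ (y k) - μ k) * f y k with hWdef
  set u : EuclideanSpace ℝ (Fin n) → Fin m → ℝ :=
    fun y j => ∑ k, (Real.log (θ (y k)) - μ k) * B k j with hudef
  set ψb : Fin m → ℝ := fun j => ∏ l, θ (xbarS l) ^ (B l j) with hψbdef
  set ρ : ℝ → ℝ := fun r => Finset.univ.inf' Finset.univ_nonempty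
      (fun k => min (h k 0) (min (h k (xbarS k + r)) (h k (max (xbarS k - r) 0)))) with hρdef
  -- basic facts about h
  have hhcont : ∀ k, Continuous (h k) := fun k => haux_continuous hII _
  have hhderiv : ∀ k, ∀ s : ℝ, 0 < s →
      HasDerivAt (h k) (gaux θ s - μ k) s := fun k s hs => haux_hasDerivAt hθc hθpos hII _ hs
  have hhpos : ∀ k, ∀ s : ℝ, 0 ≤ s → s ≠ xbarS k → 0 < h k s :=
    fun k s hs hne => haux_pos hθpos hθmono hII (hxpos k) hs hne
  have hhnn : ∀ k, ∀ s : ℝ, 0 ≤ h k s := fun k => haux_nonneg hθpos hθmono hII (hxpos k)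
  have hhself : ∀ k, h k (xbarS k) = 0 := fun k => haux_self (hxpos k)
  have hhmono : ∀ k, MonotoneOn (h k) (Set.Ici (xbarS k)) :=
    fun k => haux_monoOn hθc hθpos hθmono hII (hxpos k)
  have hhanti : ∀ k, AntitoneOn (h k) (Set.Icc 0 (xbarS k)) :=
    fun k => haux_antiOn hθc hθpos hθmono hII (hxpos k)
  have hVcont : Continuous V := by
    apply continuous_finset_sum
    intro k _
    exact (hhcont k).comp (PiLp.continuous_apply 2 (fun _ : Fin n => ℝ) k)
  have hVxbar : V xbarS = 0 := by
    rw [hVdef]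
    exact Finset.sum_eq_zero fun k _ => hhself k
  have hsingle : ∀ (y : EuclideanSpace ℝ (Fin n)) k, h k (y k) ≤ V y := by
    intro y k
    exact Finset.single_le_sum (fun k _ => hhnn k (y k)) (Finset.mem_univ k)
  have hρpos : ∀ r : ℝ, 0 < r → 0 < ρ r := by
    intro r hr
    rw [hρdef]
    rw [Finset.lt_inf'_iff]
    intro k _
    refine lt_min (hhpos k 0 le_rfl (hxpos k).ne) (lt_min ?_ ?_)
    · exact hhpos k _ (by linarith [hxpos k]) (by linarith)
    · exact hhpos k _ (le_max_right _ _) (ne_of_lt (max_lt (by linarith) (hxpos k)))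
  have hρle : ∀ (r : ℝ) (k : Fin n), ρ r ≤ min (h k 0)
      (min (h k (xbarS k + r)) (h k (max (xbarS k - r) 0))) := by
    intro r k
    exact Finset.inf'_le _ (Finset.mem_univ k)
  have claimA : ∀ r : ℝ, 0 < r → ∀ y : EuclideanSpace ℝ (Fin n), (∀ k, 0 ≤ y k) →
      V y < ρ r → ∀ k, 0 < y k ∧ |y k - xbarS k| < r := by
    intro r hr y hy hVy k
    have h1 : h k (y k) < ρ r := lt_of_le_of_lt (hsingle y k) hVy
    have hle := hρle r k
    have hpk : 0 < y k := by
      rcases eq_or_lt_of_le (hy k) with he | hl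
      · exfalso
        have h2 : ρ r ≤ h k 0 := le_trans hle (min_le_left _ _)
        rw [he] at h2
        linarith
      · exact hl
    refine ⟨hpk, abs_lt.mpr ⟨?_, ?_⟩⟩
    · by_contra hcon
      push_neg at hcon
      have hyk : y k ≤ xbarS k - r := by linarith
      have hmx : max (xbarS k - r) 0 = xbarS k - r := max_eq_left (le_trans (hy k) hyk)
      have hmem1 : y k ∈ Set.Icc 0 (xbarS k) := ⟨hy k, by linarith [hxpos k]⟩
      have hmem2 : xbarS k - r ∈ Set.Icc 0 (xbarS k) := ⟨le_trans (hy k) hyk, by linarith⟩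
      have h3 := hhanti k hmem1 hmem2 hyk
      have h2 : ρ r ≤ h k (max (xbarS k - r) 0) :=
        le_trans hle (le_trans (min_le_right _ _) (min_le_right _ _))
      rw [hmx] at h2
      linarith
    · by_contra hcon
      push_neg at hcon
      have hyk : xbarS k + r ≤ y k := by linarith
      have hmem1 : xbarS k + r ∈ Set.Ici (xbarS k) := by
        simp only [Set.mem_Ici]; linarith
      have hmem2 : y k ∈ Set.Ici (xbarS k) := by
        simp only [Set.mem_Ici]; linarith
      have h3 := hhmono k hmem1 hmem2 hyk
      have h2 : ρ r ≤ h k (xbarS k + r) :=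
        le_trans hle (le_trans (min_le_right _ _) (min_le_left _ _))
      linarith
  have claimNorm : ∀ r : ℝ, 0 < r → ∀ y : EuclideanSpace ℝ (Fin n),
      (∀ k, |y k - xbarS k| < r) → ‖y - xbarS‖ < (n + 1) * r := by
    intro r hr y hy
    have := aux_norm_lt (y - xbarS) r hr (fun k => hy k)
    exact this
  have claimB : ∀ c : ℝ, 0 < c → ∃ δ : ℝ, 0 < δ ∧
      ∀ y : EuclideanSpace ℝ (Fin n), ‖y - xbarS‖ < δ → V y < c := by
    intro c hc
    have hca := hVcont.continuousAt (x := xbarS)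
    rw [Metric.continuousAt_iff] at hca
    obtain ⟨δ, hδ, hδ'⟩ := hca c hc
    refine ⟨δ, hδ, fun y hy => ?_⟩
    have h2 := hδ' (show dist y xbarS < δ by rwa [dist_eq_norm])
    rw [Real.dist_eq, hVxbar, sub_zero] at h2
    exact lt_of_abs_lt h2
  -- positivity of equilibrium monomials
  have hψbpos : ∀ j, 0 < ψb j := by
    intro j
    exact Finset.prod_pos fun l _ => Real.rpow_pos_of_pos (hθpos _ (hxpos l)) _
  have hψeq : ∀ y : EuclideanSpace ℝ (Fin n), (∀ k, 0 < y k) →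
      ∀ j, (∏ l, θ (y l) ^ (B l j)) = ψb j * Real.exp (u y j) := by
    intro y hy j
    have h1 : ∀ l, θ (y l) ^ (B l j) = Real.exp (Real.log (θ (y l)) * B l j) := fun l =>
      Real.rpow_def_of_pos (hθpos _ (hy l)) _
    have h2 : ∀ l, θ (xbarS l) ^ (B l j) = Real.exp (μ l * B l j) := fun l =>
      Real.rpow_def_of_pos (hθpos _ (hxpos l)) _
    rw [hψbdef]
    simp only [h1, h2]
    rw [← Real.exp_sum, ← Real.exp_sum, ← Real.exp_add]
    congr 1
    simp only [hudef]
    rw [← Finset.sum_add_distrib]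
    apply Finset.sum_congr rfl
    intro l _
    ring
  have hcb : ∀ q, (∑ j, A q j * ψb j) = (∑ i, A i q) * ψb q := by
    have hmv : B.mulVec (fun q => (∑ j, A q j * ψb j) - (∑ i, A i q) * ψb q) = 0 := by
      funext k
      have hfk : f xbarS k = 0 := by rw [hxeq]; rfl
      rw [hf xbarS k] at hfk
      have hfk2 : ∑ i, ∑ j, A i j * ψb j * (B k i - B k j) = 0 := by
        rw [← hfk]
      show ∑ q, B k q * ((∑ j, A q j * ψb j) - (∑ i, A i q) * ψb q) = 0
      have e1 : ∑ q, B k q * (∑ j, A q j * ψb j) = ∑ i, ∑ j, A i j * ψb j * B k i := by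
        apply Finset.sum_congr rfl; intro q _
        rw [Finset.mul_sum]
        apply Finset.sum_congr rfl; intro j _
        ring
      have e2 : ∑ q, B k q * ((∑ i, A i q) * ψb q) = ∑ i, ∑ j, A i j * ψb j * B k j := by
        rw [Finset.sum_comm]
        apply Finset.sum_congr rfl; intro q _
        rw [Finset.sum_mul, Finset.mul_sum]
        apply Finset.sum_congr rfl; intro i _
        ring
      have e3 : ∑ q, B k q * ((∑ j, A q j * ψb j) - (∑ i, A i q) * ψb q)
          = (∑ q, B k q * (∑ j, A q j * ψb j)) - ∑ q, B k q * ((∑ i, A i q) * ψb q) := by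
        rw [← Finset.sum_sub_distrib]
        apply Finset.sum_congr rfl; intro q _
        ring
      rw [e3, e1, e2, ← Finset.sum_sub_distrib]
      rw [← hfk2]
      apply Finset.sum_congr rfl; intro i _
      rw [← Finset.sum_sub_distrib]
      apply Finset.sum_congr rfl; intro j _
      ring
    intro q
    have hz := aux_rank_inj B hBrank _ hmv
    have hq := congrFun hz q
    simp only [Pi.zero_apply] at hq
    linarith [sub_eq_zero.mp hq]
  have hWeq : ∀ y : EuclideanSpace ℝ (Fin n), (∀ k, 0 < y k) →
      W y = ∑ i, ∑ j, (A i j * ψb j) * (Real.exp (u y j) * (u y i - u y j)) := by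
    intro y hy
    have hL : ∀ k, gaux θ (y k) - μ k = Real.log (θ (y k)) - μ k := by
      intro k; rw [gaux_pos_eq (hy k)]
    rw [hWdef]
    calc ∑ k, (gaux θ (y k) - μ k) * f y k
        = ∑ k, (Real.log (θ (y k)) - μ k) *
            (∑ i, ∑ j, A i j * (∏ l, θ (y l) ^ (B l j)) * (B k i - B k j)) := by
          apply Finset.sum_congr rfl; intro k _
          rw [hL k, hf y k]
      _ = ∑ k, ∑ i, ∑ j, (Real.log (θ (y k)) - μ k) *
            (A i j * (∏ l, θ (y l) ^ (B l j)) * (B k i - B k j)) := by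
          apply Finset.sum_congr rfl; intro k _
          rw [Finset.mul_sum]
          apply Finset.sum_congr rfl; intro i _
          rw [Finset.mul_sum]
      _ = ∑ i, ∑ k, ∑ j, (Real.log (θ (y k)) - μ k) *
            (A i j * (∏ l, θ (y l) ^ (B l j)) * (B k i - B k j)) := Finset.sum_comm
      _ = ∑ i, ∑ j, ∑ k, (Real.log (θ (y k)) - μ k) *
            (A i j * (∏ l, θ (y l) ^ (B l j)) * (B k i - B k j)) :=
          Finset.sum_congr rfl fun i _ => Finset.sum_comm
      _ = ∑ i, ∑ j, (A i j * (∏ l, θ (y l) ^ (B l j))) * (u y i - u y j) := by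
          apply Finset.sum_congr rfl; intro i _
          apply Finset.sum_congr rfl; intro j _
          have e4 : ∀ k, (Real.log (θ (y k)) - μ k) *
              (A i j * (∏ l, θ (y l) ^ (B l j)) * (B k i - B k j))
              = (A i j * (∏ l, θ (y l) ^ (B l j))) *
                ((Real.log (θ (y k)) - μ k) * B k i - (Real.log (θ (y k)) - μ k) * B k j) := by
            intro k; ring
          simp only [e4]
          rw [← Finset.mul_sum]
          congr 1
          rw [Finset.sum_sub_distrib]
      _ = ∑ i, ∑ j, (A i j * ψb j) * (Real.exp (u y j) * (u y i - u y j)) := by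
          apply Finset.sum_congr rfl; intro i _
          apply Finset.sum_congr rfl; intro j _
          rw [hψeq y hy j]
          ring
  have hbal : ∀ i, ∑ j, (A i j * ψb j) = ∑ j, (A j i * ψb i) := by
    intro i
    rw [hcb i, Finset.sum_mul]
  have hWle : ∀ y : EuclideanSpace ℝ (Fin n), (∀ k, 0 < y k) → W y ≤ 0 := by
    intro y hy
    rw [hWeq y hy]
    exact (aux_lyap_sum _ (fun i j => mul_nonneg (hAnn i j) (hψbpos j).le) hbal (u y)).1
  have hWzero : ∀ y : EuclideanSpace ℝ (Fin n), (∀ k, 0 < y k) → y - p ∈ D →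
      W y = 0 → y = xbarS := by
    intro y hy hyD hW0
    have hcnn : ∀ i j, (0:ℝ) ≤ A i j * ψb j := fun i j => mul_nonneg (hAnn i j) (hψbpos j).le
    have heqc := (aux_lyap_sum _ hcnn hbal (u y)).2 (by rw [← hWeq y hy]; exact hW0)
    have hu' : ∀ i j, 0 < A i j → u y i = u y j := fun i j hA => heqc i j (mul_pos hA (hψbpos j))
    have huall : ∀ i j, u y i = u y j :=
      fun i j => aux_connect A hAnn (u y) hu' (m - 1) i j (hAirr i j)
    set Lv : EuclideanSpace ℝ (Fin n) := WithLp.toLp 2 (fun k => Real.log (θ (y k)) - μ k) with hLvdef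
    have hLsum : ∀ v : EuclideanSpace ℝ (Fin n),
        inner ℝ Lv v = ∑ k, (Real.log (θ (y k)) - μ k) * v k := by
      intro v
      rw [PiLp.inner_apply]
      simp [RCLike.inner_apply, hLvdef]
      exact Finset.sum_congr rfl fun k _ => mul_comm _ _
    have hker : D ≤ LinearMap.ker (innerSL ℝ Lv).toLinearMap := by
      rw [hD]
      apply Submodule.span_le.mpr
      rintro v ⟨i, j, hvij⟩
      obtain rfl : v = WithLp.toLp 2 (fun k => B k i - B k j) := by rw [← hvij]
      rw [SetLike.mem_coe, LinearMap.mem_ker, ContinuousLinearMap.coe_coe]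
      have hv : (innerSL ℝ Lv) (WithLp.toLp 2 (fun k => B k i - B k j) : EuclideanSpace ℝ (Fin n))
          = ∑ k, (Real.log (θ (y k)) - μ k) * (B k i - B k j) := hLsum _
      rw [hv]
      have hs : ∑ k, (Real.log (θ (y k)) - μ k) * (B k i - B k j) = u y i - u y j := by
        simp only [hudef]
        rw [← Finset.sum_sub_distrib]
        apply Finset.sum_congr rfl; intro k _
        ring
      rw [hs, huall i j, sub_self]
    have hyx : y - xbarS ∈ D := by
      have h2 : y - xbarS = (y - p) - (xbarS - p) := by abel
      rw [h2]
      have hxD : xbarS - p ∈ D := by rw [hS] at hxS; exact hxS.2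
      exact D.sub_mem hyD hxD
    have hinner : inner ℝ Lv (y - xbarS) = 0 := hker hyx
    have hsum0 : ∑ k, (Real.log (θ (y k)) - μ k) * (y k - xbarS k) = 0 := by
      rw [← hinner, hLsum]
      rfl
    have hfact : ∀ k, Real.log (θ (y k)) - μ k =
        Real.log (θ (y k)) - Real.log (θ (xbarS k)) := fun k => rfl
    have hterm : ∀ k ∈ Finset.univ, (0:ℝ) ≤ (Real.log (θ (y k)) - μ k) * (y k - xbarS k) := by
      intro k _
      rw [hfact k]
      rcases lt_trichotomy (y k) (xbarS k) with hlt | heq2 | hgt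
      · have hlog : Real.log (θ (y k)) < Real.log (θ (xbarS k)) :=
          Real.log_lt_log (hθpos _ (hy k))
            (hθmono (Set.mem_Ici.mpr (hy k).le) (Set.mem_Ici.mpr (hxpos k).le) hlt)
        nlinarith
      · rw [heq2]; simp
      · have hlog : Real.log (θ (xbarS k)) < Real.log (θ (y k)) :=
          Real.log_lt_log (hθpos _ (hxpos k))
            (hθmono (Set.mem_Ici.mpr (hxpos k).le) (Set.mem_Ici.mpr (hy k).le) hgt)
        nlinarith
    have hz := (Finset.sum_eq_zero_iff_of_nonneg hterm).mp hsum0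
    ext k
    have hzk := hz k (Finset.mem_univ k)
    rw [hfact k] at hzk
    by_contra hne
    rcases lt_or_gt_of_ne hne with hlt | hgt
    · have hlog : Real.log (θ (y k)) < Real.log (θ (xbarS k)) :=
        Real.log_lt_log (hθpos _ (hy k))
          (hθmono (Set.mem_Ici.mpr (hy k).le) (Set.mem_Ici.mpr (hxpos k).le) hlt)
      nlinarith
    · have hlog : Real.log (θ (xbarS k)) < Real.log (θ (y k)) :=
        Real.log_lt_log (hθpos _ (hxpos k))
          (hθmono (Set.mem_Ici.mpr (hxpos k).le) (Set.mem_Ici.mpr (hy k).le) hgt)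
      nlinarith
  have hfD : ∀ y : EuclideanSpace ℝ (Fin n), f y ∈ D := by
    intro y
    have hrepr : f y = ∑ i : Fin m, ∑ j : Fin m, (A i j * ∏ l, θ (y l) ^ (B l j)) •
        (show EuclideanSpace ℝ (Fin n) from WithLp.toLp 2 fun k => B k i - B k j) := by
      ext k
      rw [hf y k]
      have happ : ∀ (G : Fin m → EuclideanSpace ℝ (Fin n)),
          (∑ i, G i) k = ∑ i, G i k := by
        intro G
        exact map_sum (EuclideanSpace.proj (𝕜 := ℝ) k) G Finset.univ
      rw [happ]
      refine Finset.sum_congr rfl fun i _ => ?_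
      rw [happ]
      refine Finset.sum_congr rfl fun j _ => ?_
      have hsm : ((A i j * ∏ l, θ (y l) ^ (B l j)) •
          (show EuclideanSpace ℝ (Fin n) from WithLp.toLp 2 fun k => B k i - B k j)) k
          = (A i j * ∏ l, θ (y l) ^ (B l j)) * (B k i - B k j) := rfl
      rw [hsm]
    rw [hrepr]
    apply Submodule.sum_mem
    intro i _
    apply Submodule.sum_mem
    intro j _
    apply Submodule.smul_mem
    rw [hD]
    exact Submodule.subset_span ⟨i, j, rfl⟩
  have hfkcont : ∀ k, Continuous (fun y : EuclideanSpace ℝ (Fin n) => f y k) := by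
    intro k
    have heq : (fun y : EuclideanSpace ℝ (Fin n) => f y k) =
        fun y => ∑ i, ∑ j, A i j * (∏ l, θ (y l) ^ (B l j)) * (B k i - B k j) :=
      funext fun y => hf y k
    rw [heq]
    apply continuous_finset_sum
    intro i _
    apply continuous_finset_sum
    intro j _
    refine Continuous.mul (Continuous.mul continuous_const ?_) continuous_const
    apply continuous_finset_prod
    intro l _
    exact (hθc.comp (PiLp.continuous_apply 2 (fun _ : Fin n => ℝ) l)).rpow_const (fun y => Or.inr (hBnn l j))
  have hWcontOn : ContinuousOn W {y : EuclideanSpace ℝ (Fin n) | ∀ k, 0 < y k} := by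
    rw [hWdef]
    apply continuousOn_finset_sum
    intro k _
    apply ContinuousOn.mul
    · apply ContinuousOn.sub ?_ continuousOn_const
      intro y hy
      have h0 : ContinuousAt (gaux θ ∘ fun z : EuclideanSpace ℝ (Fin n) => z k) y :=
        ContinuousAt.comp (gaux_continuousAt hθc hθpos (hy k)) (PiLp.continuous_apply 2 (fun _ : Fin n => ℝ) k).continuousAt
      have h1 : ContinuousAt (fun z : EuclideanSpace ℝ (Fin n) => gaux θ (z k)) y := h0
      exact h1.continuousWithinAt
    · exact (hfkcont k).continuousOn
  -- dynamics
  have hchain : ∀ x : ℝ → EuclideanSpace ℝ (Fin n),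
      (∀ t ∈ Set.Ici (0:ℝ), HasDerivWithinAt x (f (x t)) (Set.Ici 0) t) →
      ∀ t ∈ Set.Ici (0:ℝ), (∀ k, 0 < x t k) →
      HasDerivWithinAt (fun s => V (x s)) (W (x t)) (Set.Ici 0) t := by
    intro x hx t ht hposx
    have hk : ∀ k : Fin n, HasDerivWithinAt (fun s => x s k) (f (x t) k) (Set.Ici 0) t := by
      intro k
      have h1 := (EuclideanSpace.proj (𝕜 := ℝ) k).hasFDerivAt.comp_hasDerivWithinAt t (hx t ht)
      exact h1
    have hsum : HasDerivWithinAt (fun s => ∑ k, h k (x s k))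
        (∑ k, (gaux θ (x t k) - μ k) * f (x t) k) (Set.Ici 0) t := by
      apply HasDerivWithinAt.fun_sum
      intro k _
      have h2 := (hhderiv k (x t k) (hposx k)).comp_hasDerivWithinAt t (hk k)
      exact h2
    exact hsum
  have hcontx : ∀ x : ℝ → EuclideanSpace ℝ (Fin n),
      (∀ t ∈ Set.Ici (0:ℝ), HasDerivWithinAt x (f (x t)) (Set.Ici 0) t) →
      ContinuousOn x (Set.Ici 0) := by
    intro x hx t ht
    exact (hx t ht).continuousWithinAt
  have hanti : ∀ x : ℝ → EuclideanSpace ℝ (Fin n),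
      (∀ t ∈ Set.Ici (0:ℝ), HasDerivWithinAt x (f (x t)) (Set.Ici 0) t) →
      ∀ T : ℝ, 0 < T → (∀ s, 0 ≤ s → s < T → ∀ k, 0 < x s k) →
      AntitoneOn (fun s => V (x s)) (Set.Icc 0 T) := by
    intro x hx T hT hposx
    have hcx : ContinuousOn (fun s => V (x s)) (Set.Icc 0 T) :=
      hVcont.comp_continuousOn ((hcontx x hx).mono Set.Icc_subset_Ici_self)
    apply antitoneOn_of_deriv_nonpos (convex_Icc 0 T) hcx
    · intro s hs
      rw [interior_Icc] at hs
      have hder := hchain x hx s (Set.mem_Ici.mpr hs.1.le) (hposx s hs.1.le hs.2)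
      have hd2 : HasDerivAt (fun s => V (x s)) (W (x s)) s :=
        hder.hasDerivAt (Filter.mem_of_superset (Ioi_mem_nhds hs.1) Set.Ioi_subset_Ici_self)
      exact hd2.differentiableAt.differentiableWithinAt
    · intro s hs
      rw [interior_Icc] at hs
      have hder := hchain x hx s (Set.mem_Ici.mpr hs.1.le) (hposx s hs.1.le hs.2)
      have hd2 : HasDerivAt (fun s => V (x s)) (W (x s)) s :=
        hder.hasDerivAt (Filter.mem_of_superset (Ioi_mem_nhds hs.1) Set.Ioi_subset_Ici_self)
      rw [hd2.deriv]
      exact hWle _ (hposx s hs.1.le hs.2)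
  have hantiIci : ∀ x : ℝ → EuclideanSpace ℝ (Fin n),
      (∀ t ∈ Set.Ici (0:ℝ), HasDerivWithinAt x (f (x t)) (Set.Ici 0) t) →
      (∀ s, 0 ≤ s → ∀ k, 0 < x s k) →
      AntitoneOn (fun s => V (x s)) (Set.Ici 0) := by
    intro x hx hposx
    have hcx : ContinuousOn (fun s => V (x s)) (Set.Ici 0) :=
      hVcont.comp_continuousOn (hcontx x hx)
    apply antitoneOn_of_deriv_nonpos (convex_Ici 0) hcx
    · intro s hs
      rw [interior_Ici] at hs
      have hder := hchain x hx s (Set.mem_Ici.mpr hs.le) (hposx s hs.le)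
      have hd2 : HasDerivAt (fun s => V (x s)) (W (x s)) s :=
        hder.hasDerivAt (Filter.mem_of_superset (Ioi_mem_nhds hs) Set.Ioi_subset_Ici_self)
      exact hd2.differentiableAt.differentiableWithinAt
    · intro s hs
      rw [interior_Ici] at hs
      have hder := hchain x hx s (Set.mem_Ici.mpr hs.le) (hposx s hs.le)
      have hd2 : HasDerivAt (fun s => V (x s)) (W (x s)) s :=
        hder.hasDerivAt (Filter.mem_of_superset (Ioi_mem_nhds hs) Set.Ioi_subset_Ici_self)
      rw [hd2.deriv]
      exact hWle _ (hposx s hs.le)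
  have hinv : ∀ c : ℝ, 0 < c →
      (∀ y : EuclideanSpace ℝ (Fin n), (∀ k, 0 ≤ y k) → V y < c → ∀ k, 0 < y k) →
      ∀ x : ℝ → EuclideanSpace ℝ (Fin n),
      (∀ t ∈ Set.Ici (0:ℝ), HasDerivWithinAt x (f (x t)) (Set.Ici 0) t) →
      x 0 ∈ S → V (x 0) < c → ∀ t : ℝ, 0 ≤ t → (∀ k, 0 < x t k) ∧ V (x t) < c := by
    intro c hc hcpos x hx hx0S hV0
    set U : Set (EuclideanSpace ℝ (Fin n)) := {y | (∀ k, 0 < y k) ∧ V y < c} with hUdef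
    have hUopen : IsOpen U := by
      have h1 : IsOpen {y : EuclideanSpace ℝ (Fin n) | ∀ k, 0 < y k} := by
        have he : {y : EuclideanSpace ℝ (Fin n) | ∀ k, 0 < y k} =
            ⋂ k, (fun y : EuclideanSpace ℝ (Fin n) => y k) ⁻¹' Set.Ioi 0 := by
          ext y; simp [Set.mem_iInter]
        rw [he]
        exact isOpen_iInter_of_finite fun k => (isOpen_Ioi).preimage (PiLp.continuous_apply 2 (fun _ : Fin n => ℝ) k)
      have h2 : IsOpen {y : EuclideanSpace ℝ (Fin n) | V y < c} :=
        isOpen_lt hVcont continuous_const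
      exact h1.inter h2
    have hx0U : x 0 ∈ U := by
      refine ⟨fun k => hcpos _ ?_ hV0 k, hV0⟩
      rw [hS] at hx0S; exact hx0S.1
    suffices hU : ∀ t : ℝ, 0 ≤ t → x t ∈ U by
      intro t ht; exact ⟨(hU t ht).1, (hU t ht).2⟩
    intro t ht
    by_contra hxtU
    set Bad : Set ℝ := {s | s ∈ Set.Ici (0:ℝ) ∧ x s ∈ Uᶜ} with hBaddef
    have hBadne : Bad.Nonempty := ⟨t, ht, hxtU⟩
    have hBadclosed : IsClosed Bad := by
      have hcc := (hcontx x hx).preimage_isClosed_of_isClosed isClosed_Ici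
        hUopen.isClosed_compl
      have heq2 : Bad = Set.Ici 0 ∩ x ⁻¹' Uᶜ := by
        ext s; simp [hBaddef, Set.mem_inter_iff]
      rw [heq2]; exact hcc
    have hBadbdd : BddBelow Bad := ⟨0, fun s hs => hs.1⟩
    set T := sInf Bad with hTdef
    have hTBad : T ∈ Bad := hBadclosed.csInf_mem hBadne hBadbdd
    have hT0 : 0 ≤ T := hTBad.1
    have hTpos : 0 < T := by
      rcases eq_or_lt_of_le hT0 with he | hl
      · exfalso; exact (he ▸ hTBad).2 hx0U
      · exact hl
    have hbefore : ∀ s, 0 ≤ s → s < T → x s ∈ U := by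
      intro s hs hsT
      by_contra hbad
      exact absurd (csInf_le hBadbdd ⟨hs, hbad⟩) (not_le.mpr hsT)
    have hantiT := hanti x hx T hTpos (fun s hs hsT k => (hbefore s hs hsT).1 k)
    have hVT : V (x T) < c := by
      have h5 := hantiT (Set.left_mem_Icc.mpr hT0) (Set.right_mem_Icc.mpr hT0) hT0
      exact lt_of_le_of_lt h5 hV0
    have hxTnn : ∀ k, 0 ≤ x T k := by
      intro k
      have hclos : T ∈ closure (Set.Ioo 0 T) := by
        rw [closure_Ioo (ne_of_lt hTpos)]
        exact Set.right_mem_Icc.mpr hT0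
      have hnb : (nhdsWithin T (Set.Ioo 0 T)).NeBot := mem_closure_iff_nhdsWithin_neBot.mp hclos
      have htend : Filter.Tendsto (fun s => x s k) (nhdsWithin T (Set.Ioo 0 T)) (nhds (x T k)) := by
        have h1 : ContinuousWithinAt x (Set.Ioo 0 T) T :=
          ((hcontx x hx) T (Set.mem_Ici.mpr hT0)).mono (fun s hs => le_of_lt hs.1)
        exact (PiLp.continuous_apply 2 (fun _ : Fin n => ℝ) k).continuousAt.comp_continuousWithinAt h1
      apply ge_of_tendsto htend
      filter_upwards [self_mem_nhdsWithin] with s hs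
      exact ((hbefore s hs.1.le hs.2).1 k).le
    have hxTU : x T ∈ U := ⟨fun k => hcpos _ hxTnn hVT k, hVT⟩
    exact hTBad.2 hxTU
  have haff : ∀ x : ℝ → EuclideanSpace ℝ (Fin n),
      (∀ t ∈ Set.Ici (0:ℝ), HasDerivWithinAt x (f (x t)) (Set.Ici 0) t) →
      ∀ t : ℝ, 0 ≤ t → x t - x 0 ∈ D := by
    intro x hx t ht
    have hmemDD : x t - x 0 ∈ Dᗮᗮ := by
      rw [Submodule.mem_orthogonal]
      intro w hw
      have hgw : ∀ s ∈ Set.Icc (0:ℝ) t,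
          (fun s => inner ℝ w (x s)) s = (fun s => inner ℝ w (x s)) 0 := by
        apply constant_of_has_deriv_right_zero
        · exact (innerSL ℝ w).continuous.comp_continuousOn
            ((hcontx x hx).mono Set.Icc_subset_Ici_self)
        · intro s hs
          have h1 := (innerSL ℝ w).hasFDerivAt.comp_hasDerivWithinAt s
            (hx s (Set.mem_Ici.mpr hs.1))
          have h2 : (innerSL ℝ w) (f (x s)) = 0 := by
            have h3 : inner ℝ (f (x s)) w = 0 :=
              (Submodule.mem_orthogonal D w).mp hw (f (x s)) (hfD (x s))
            have h4 : inner ℝ w (f (x s)) = 0 := by rw [real_inner_comm]; exact h3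
            exact h4
          have h5 := h1.mono (Set.Ici_subset_Ici.mpr hs.1)
          rw [h2] at h5
          exact h5
      have h6 := hgw t (Set.mem_Icc.mpr ⟨ht, le_rfl⟩)
      simp only at h6
      rw [inner_sub_right, h6, sub_self]
    rw [Submodule.orthogonal_orthogonal] at hmemDD
    exact hmemDD
  have hnp1 : (0:ℝ) < (n:ℝ) + 1 := by positivity
  constructor
  · -- stability
    intro ε hε
    have hr : 0 < ε / ((n:ℝ) + 1) := by positivity
    set r := ε / ((n:ℝ) + 1) with hrdef
    obtain ⟨δ, hδ, hδV⟩ := claimB (ρ r) (hρpos r hr)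
    refine ⟨δ, hδ, ?_⟩
    intro x hsol hx0 hnear t ht
    have hV0 : V (x 0) < ρ r := hδV _ hnear
    have hposc : ∀ y : EuclideanSpace ℝ (Fin n), (∀ k, 0 ≤ y k) → V y < ρ r → ∀ k, 0 < y k :=
      fun y hy hVy k => (claimA r hr y hy hVy k).1
    have hinvt := hinv (ρ r) (hρpos r hr) hposc x hsol hx0 hV0 t ht
    have hcoords : ∀ k, |x t k - xbarS k| < r :=
      fun k => (claimA r hr (x t) (fun k => (hinvt.1 k).le) hinvt.2 k).2
    have hnrm := claimNorm r hr (x t) hcoords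
    calc ‖x t - xbarS‖ < ((n:ℝ) + 1) * r := hnrm
      _ = ε := by rw [hrdef]; field_simp
  · -- attraction
    have h1pos := hρpos 1 one_pos
    obtain ⟨δ, hδ, hδV⟩ := claimB (ρ 1) h1pos
    refine ⟨δ, hδ, ?_⟩
    intro x hsol hx0 hnear
    have hposc : ∀ y : EuclideanSpace ℝ (Fin n), (∀ k, 0 ≤ y k) → V y < ρ 1 → ∀ k, 0 < y k :=
      fun y hy hVy k => (claimA 1 one_pos y hy hVy k).1
    have hV0 : V (x 0) < ρ 1 := hδV _ hnear
    have hall := hinv (ρ 1) h1pos hposc x hsol hx0 hV0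
    have hpos : ∀ s : ℝ, 0 ≤ s → ∀ k, 0 < x s k := fun s hs => (hall s hs).1
    have hAnti := hantiIci x hsol hpos
    have hx0D : x 0 - p ∈ D := by
      rw [hS] at hx0; exact hx0.2
    have haffp : ∀ t : ℝ, 0 ≤ t → x t - p ∈ D := by
      intro t ht
      have h1 := haff x hsol t ht
      have h2 : x t - p = (x t - x 0) + (x 0 - p) := by abel
      rw [h2]; exact D.add_mem h1 hx0D
    have hdrop : ∀ c'' : ℝ, 0 < c'' → ∃ T : ℝ, 0 ≤ T ∧ V (x T) < c'' := by
      intro c'' hc''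
      by_contra hcon
      push_neg at hcon
      set K : Set (EuclideanSpace ℝ (Fin n)) :=
        {y | (∀ k, 0 ≤ y k) ∧ (y - p ∈ D) ∧ c'' ≤ V y ∧ V y ≤ V (x 0)} with hKdef
      have hKpos : ∀ y ∈ K, ∀ k, 0 < y k := by
        intro y hy
        exact hposc y hy.1 (lt_of_le_of_lt hy.2.2.2 hV0)
      have hKclosed : IsClosed K := by
        have h1 : IsClosed {y : EuclideanSpace ℝ (Fin n) | ∀ k, 0 ≤ y k} := by
          have he : {y : EuclideanSpace ℝ (Fin n) | ∀ k, 0 ≤ y k} =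
              ⋂ k, (fun y : EuclideanSpace ℝ (Fin n) => y k) ⁻¹' Set.Ici 0 := by
            ext y; simp [Set.mem_iInter]
          rw [he]
          exact isClosed_iInter fun k => IsClosed.preimage (PiLp.continuous_apply 2 (fun _ : Fin n => ℝ) k) isClosed_Ici
        have h2 : IsClosed {y : EuclideanSpace ℝ (Fin n) | y - p ∈ D} := by
          have he : {y : EuclideanSpace ℝ (Fin n) | y - p ∈ D} =
              (fun y : EuclideanSpace ℝ (Fin n) => y - p) ⁻¹' (D : Set (EuclideanSpace ℝ (Fin n))) := rfl
          rw [he]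
          exact (Submodule.closed_of_finiteDimensional D).preimage
            (continuous_id.sub continuous_const)
        have h3 : IsClosed {y : EuclideanSpace ℝ (Fin n) | c'' ≤ V y} :=
          isClosed_le continuous_const hVcont
        have h4 : IsClosed {y : EuclideanSpace ℝ (Fin n) | V y ≤ V (x 0)} :=
          isClosed_le hVcont continuous_const
        have he2 : K = {y : EuclideanSpace ℝ (Fin n) | ∀ k, 0 ≤ y k} ∩
            ({y : EuclideanSpace ℝ (Fin n) | y - p ∈ D} ∩
             ({y : EuclideanSpace ℝ (Fin n) | c'' ≤ V y} ∩
              {y : EuclideanSpace ℝ (Fin n) | V y ≤ V (x 0)})) := by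
          ext y
          simp only [hKdef, Set.mem_setOf_eq, Set.mem_inter_iff]
        rw [he2]
        exact h1.inter (h2.inter (h3.inter h4))
      have hKbdd : Bornology.IsBounded K := by
        apply Bornology.IsBounded.subset (Metric.isBounded_closedBall
          (x := xbarS) (r := ((n:ℝ)+1)))
        intro y hy
        have hcoords : ∀ k, |y k - xbarS k| < 1 :=
          fun k => (claimA 1 one_pos y hy.1 (lt_of_le_of_lt hy.2.2.2 hV0) k).2
        have hn2 := claimNorm 1 one_pos y hcoords
        rw [Metric.mem_closedBall, dist_eq_norm]
        rw [mul_one] at hn2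
        exact hn2.le
      have hKcompact : IsCompact K := Metric.isCompact_of_isClosed_isBounded hKclosed hKbdd
      have hx0K : x 0 ∈ K := ⟨fun k => (hpos 0 le_rfl k).le, hx0D, hcon 0 le_rfl, le_rfl⟩
      obtain ⟨y0, hy0K, hy0max⟩ := hKcompact.exists_isMaxOn ⟨x 0, hx0K⟩
        (hWcontOn.mono (fun y hy => hKpos y hy))
      have hy0pos : ∀ k, 0 < y0 k := hKpos y0 hy0K
      have hWy0le : W y0 ≤ 0 := hWle y0 hy0pos
      have hWy0ne : W y0 ≠ 0 := by
        intro h0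
        have heq3 := hWzero y0 hy0pos hy0K.2.1 h0
        rw [heq3] at hy0K
        have h7 := hy0K.2.2.1
        rw [hVxbar] at h7
        linarith
      have hη : 0 < -W y0 := by
        rcases lt_or_eq_of_le hWy0le with hl | he
        · linarith
        · exact absurd he hWy0ne
      have hxtK : ∀ t : ℝ, 0 ≤ t → x t ∈ K := fun t ht =>
        ⟨fun k => (hpos t ht k).le, haffp t ht, hcon t ht,
          hAnti Set.self_mem_Ici (Set.mem_Ici.mpr ht) ht⟩
      have hψanti : AntitoneOn (fun t => V (x t) + (-W y0) * t) (Set.Ici 0) := by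
        apply antitoneOn_of_deriv_nonpos (convex_Ici 0)
        · exact (hVcont.comp_continuousOn (hcontx x hsol)).add
            ((continuous_const.mul continuous_id).continuousOn)
        · intro s hs
          rw [interior_Ici] at hs
          have hder := hchain x hsol s (Set.mem_Ici.mpr hs.le) (hpos s hs.le)
          have hd2 : HasDerivAt (fun s => V (x s)) (W (x s)) s :=
            hder.hasDerivAt (Filter.mem_of_superset (Ioi_mem_nhds hs) Set.Ioi_subset_Ici_self)
          have hd3 : HasDerivAt (fun t : ℝ => (-W y0) * t) (-W y0) s := by
            simpa using (hasDerivAt_id s).const_mul (-W y0)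
          exact ((hd2.add hd3).differentiableAt).differentiableWithinAt
        · intro s hs
          rw [interior_Ici] at hs
          have hder := hchain x hsol s (Set.mem_Ici.mpr hs.le) (hpos s hs.le)
          have hd2 : HasDerivAt (fun s => V (x s)) (W (x s)) s :=
            hder.hasDerivAt (Filter.mem_of_superset (Ioi_mem_nhds hs) Set.Ioi_subset_Ici_self)
          have hd3 : HasDerivAt (fun t : ℝ => (-W y0) * t) (-W y0) s := by
            simpa using (hasDerivAt_id s).const_mul (-W y0)
          rw [(hd2.fun_add hd3).deriv]
          have hWs : W (x s) ≤ W y0 := hy0max (hxtK s hs.le)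
          linarith
      set t1 : ℝ := (V (x 0) - c'') / (-W y0) + 1 with ht1def
      have hVx0c : c'' ≤ V (x 0) := hcon 0 le_rfl
      have ht1pos : 0 ≤ t1 := by
        have h8 : 0 ≤ (V (x 0) - c'') / (-W y0) := div_nonneg (by linarith) hη.le
        rw [ht1def]
        linarith
      have hle := hψanti Set.self_mem_Ici (Set.mem_Ici.mpr ht1pos) ht1pos
      simp only [mul_zero, add_zero] at hle
      have hexpand : (-W y0) * t1 = (V (x 0) - c'') + (-W y0) := by
        rw [ht1def, mul_add, mul_one, mul_div_cancel₀ _ (ne_of_gt hη)]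
      have hVt1 : V (x t1) < c'' := by nlinarith
      exact absurd (hcon t1 ht1pos) (not_le.mpr hVt1)
    rw [Metric.tendsto_atTop]
    intro ε' hε'
    have hr' : 0 < ε' / ((n:ℝ) + 1) := by positivity
    set r' := ε' / ((n:ℝ) + 1) with hr'def
    obtain ⟨T, hT, hVT⟩ := hdrop (ρ r') (hρpos r' hr')
    refine ⟨T, ?_⟩
    intro t ht'
    have htT : 0 ≤ t := le_trans hT ht'
    have hVt : V (x t) < ρ r' :=
      lt_of_le_of_lt (hAnti (Set.mem_Ici.mpr hT) (Set.mem_Ici.mpr htT) ht') hVT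
    have hcoords : ∀ k, |x t k - xbarS k| < r' :=
      fun k => (claimA r' hr' (x t) (fun k => (hpos t htT k).le) hVt k).2
    have hnrm := claimNorm r' hr' (x t) hcoords
    rw [dist_eq_norm]
    calc ‖x t - xbarS‖ < ((n:ℝ) + 1) * r' := hnrm
      _ = ε' := by rw [hr'def]; field_simp
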